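/- arXiv:1105.3370 — 4 statements merged into one kernel-verified Lean document; each statement's English description precedes it below -/
import Mathlib

section
/- For the meridian surface M′_m on the rotational hypersurface with timelike axis, the mean curvature vector H = (κ/(2f))·n₁ + ((κ_m f√(ḟ²−ġ²) + ġ)/(2f√(ḟ²−ġ²)))·n₂ (with ⟨n₁,n₁⟩ = 1, ⟨n₂,n₂⟩ = −1, ⟨n₁,n₂⟩ = 0) is lightlike and nonzero if and only if κ ≠ 0 and κ² = (κ_m f√(ḟ²−ġ²) + ġ)²/(ḟ² − ġ²). -/
/-- The meridian surface M′_m (timelike axis) is marginally trapped, i.e. its mean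
curvature vector H = (κ/(2f))n₁ + ((κ_m f√(ḟ²−ġ²)+ġ)/(2f√(ḟ²−ġ²)))n₂ is lightlike and
nonzero, if and only if κ ≠ 0 and κ² = (κ_m f√(ḟ²−ġ²)+ġ)²/(ḟ²−ġ²). -/
theorem stmt_5 (f f' g' κ κm : ℝ) (hf : 0 < f) (hE : 0 < f' ^ 2 - g' ^ 2)
    (D : ℝ) (hD : D = Real.sqrt (f' ^ 2 - g' ^ 2))
    (h₁ h₂ : ℝ)
    (hh₁ : h₁ = κ / (2 * f))                     -- n₁-component of H
    (hh₂ : h₂ = (κm * f * D + g') / (2 * f * D)) -- n₂-component of H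
    (HH : ℝ) (hHH : HH = h₁ ^ 2 - h₂ ^ 2) :      -- ⟨H,H⟩
    (¬(h₁ = 0 ∧ h₂ = 0) ∧ HH = 0) ↔
      (κ ≠ 0 ∧ κ ^ 2 = (κm * f * D + g') ^ 2 / (f' ^ 2 - g' ^ 2)) := by
  have hDpos : 0 < D := hD ▸ Real.sqrt_pos.mpr hE
  have hD2 : D ^ 2 = f' ^ 2 - g' ^ 2 := by
    rw [hD, Real.sq_sqrt hE.le]
  set A := κm * f * D + g' with hA
  have hf0 : f ≠ 0 := hf.ne'
  have hD0 : D ≠ 0 := hDpos.ne'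
  have hkey : HH = 0 ↔ κ ^ 2 = A ^ 2 / (f' ^ 2 - g' ^ 2) := by
    rw [hHH, hh₁, hh₂, ← hD2]
    rw [div_pow, div_pow, sub_eq_zero, div_eq_div_iff (by positivity) (by positivity),
      eq_div_iff (by positivity)]
    have hf2 : (4 * f ^ 2 : ℝ) ≠ 0 := by positivity
    constructor <;> intro h
    · exact mul_left_cancel₀ hf2 (by linear_combination h)
    · linear_combination (4 * f ^ 2) * h
  constructor
  · rintro ⟨hne, hzero⟩
    have hk2 := hkey.mp hzero
    refine ⟨?_, hk2⟩
    intro hκ0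
    apply hne
    have hA0 : A ^ 2 = 0 := by
      have := hk2
      rw [hκ0] at this
      have : A ^ 2 / (f' ^ 2 - g' ^ 2) = 0 := by simpa using this.symm
      have := (div_eq_zero_iff.mp this).resolve_right hE.ne'
      exact this
    have : A = 0 := by nlinarith
    constructor
    · rw [hh₁, hκ0]; simp
    · rw [hh₂, this]; simp
  · rintro ⟨hκ, hk2⟩
    refine ⟨?_, hkey.mpr hk2⟩
    rintro ⟨h1, _⟩
    rw [hh₁, div_eq_zero_iff] at h1
    rcases h1 with h | h
    · exact hκ h
    · exact hf0 (by linarith)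
end

section
/- Let a ≠ 0 be constant, f(u) = u, and suppose g : I → ℝ (with 0 ∉ I, 1 − ġ² > 0) satisfies κ ≡ a constant and the marginally trapped condition. Then g satisfies the ODE u·g̈ + ġ − ġ³ = ε·a·(1 − ġ²)^{3/2} for some ε ∈ {1, −1}. -/
/-!
The marginally trapped condition is, after clearing denominators, the square of the ODE:
`(u g̈ + ġ - ġ³)² = (a (1 - ġ²)^{3/2})²` at every point of `I`. Both sides before squaring are
continuous and the right one never vanishes, so on the connected set `I` they agree up to one
global sign.
-/

open Real Set

lemma Real.rpow_three_halves_eq_mul_sqrt {x : ℝ} (hx : 0 ≤ x) :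
    x ^ ((3 : ℝ) / 2) = x * √x := by
  rw [sqrt_eq_rpow, ← rpow_one_add' hx (by norm_num)]
  norm_num

/-- With `x = 1 - v²`, the curvature term is `κ u √x = u w / x`, so the condition reads
`a² = (u w + v x)² / x³`. -/
lemma sq_eq_sq_of_marginallyTrapped {a u v w : ℝ} (hx : 0 < 1 - v ^ 2)
    (h : a ^ 2 = (w / (1 - v ^ 2) ^ ((3 : ℝ) / 2) * u * √(1 - v ^ 2) + v) ^ 2 / (1 - v ^ 2)) :
    (u * w + v - v ^ 3) ^ 2 = (a * (1 - v ^ 2) ^ ((3 : ℝ) / 2)) ^ 2 := by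
  set x := 1 - v ^ 2
  have hsq : √x ^ 2 = x := sq_sqrt hx.le
  rw [rpow_three_halves_eq_mul_sqrt hx.le] at h ⊢
  have hcurv : w / (x * √x) * u * √x + v = (u * w + v - v ^ 3) / x := by
    field_simp
    ring
  rw [hcurv, div_pow, div_div, eq_div_iff (by positivity)] at h
  linear_combination -h - a ^ 2 * x ^ 2 * hsq

theorem stmt_6_general (a : ℝ) (ha : a ≠ 0) (I : Set ℝ) (hIconn : IsConnected I)
    (g' g'' : ℝ → ℝ)
    (hg' : ∀ u ∈ I, HasDerivAt g' (g'' u) u)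
    (hg''cont : ContinuousOn g'' I)
    (hreg : ∀ u ∈ I, 0 < 1 - g' u ^ 2)
    (κm : ℝ → ℝ) (hκm : ∀ u ∈ I, κm u = g'' u / (1 - g' u ^ 2) ^ ((3 : ℝ) / 2))
    -- the marginally trapped condition κ² = (κ_m f √(1−ġ²) + ġ)²/(1−ġ²) with κ ≡ a, f = u :
    (hmt : ∀ u ∈ I, a ^ 2 =
      (κm u * u * Real.sqrt (1 - g' u ^ 2) + g' u) ^ 2 / (1 - g' u ^ 2)) :
    ∃ ε : ℝ, (ε = 1 ∨ ε = -1) ∧ ∀ u ∈ I,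
      u * g'' u + g' u - g' u ^ 3 = ε * a * (1 - g' u ^ 2) ^ ((3 : ℝ) / 2) := by
  have hg'cont : ContinuousOn g' I := fun u hu => (hg' u hu).continuousAt.continuousWithinAt
  have hlhs : ContinuousOn (fun u => u * g'' u + g' u - g' u ^ 3) I := by fun_prop
  have hrhs : ContinuousOn (fun u => a * (1 - g' u ^ 2) ^ ((3 : ℝ) / 2)) I :=
    continuousOn_const.mul ((continuousOn_const.sub (hg'cont.pow 2)).rpow_const
      fun _ _ => Or.inr (by norm_num))
  have hsq : EqOn (fun u => (u * g'' u + g' u - g' u ^ 3) ^ 2)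
      (fun u => (a * (1 - g' u ^ 2) ^ ((3 : ℝ) / 2)) ^ 2) I := fun u hu =>
    sq_eq_sq_of_marginallyTrapped (hreg u hu) (hκm u hu ▸ hmt u hu)
  have hrhs_ne : ∀ {u}, u ∈ I → a * (1 - g' u ^ 2) ^ ((3 : ℝ) / 2) ≠ 0 := fun hu =>
    mul_ne_zero ha (rpow_pos_of_pos (hreg _ hu) _).ne'
  rcases hIconn.isPreconnected.eq_or_eq_neg_of_sq_eq hlhs hrhs hsq hrhs_ne with h | h
  · exact ⟨1, Or.inl rfl, fun u hu => by simpa using h hu⟩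
  · exact ⟨-1, Or.inr rfl, fun u hu => by simpa using h hu⟩

/-- If the meridian surface M′_m with f(u) = u has constant spherical curvature κ ≡ a ≠ 0
and is marginally trapped, then g satisfies u·g̈ + ġ − ġ³ = ε·a·(1 − ġ²)^{3/2}
for some ε ∈ {1, −1}. -/
theorem stmt_6 (a : ℝ) (ha : a ≠ 0) (I : Set ℝ) (hI : IsOpen I) (hIconn : IsConnected I)
    (h0 : (0 : ℝ) ∉ I) (g g' g'' : ℝ → ℝ)
    (hg : ∀ u ∈ I, HasDerivAt g (g' u) u)
    (hg' : ∀ u ∈ I, HasDerivAt g' (g'' u) u)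
    (hg''cont : ContinuousOn g'' I)
    (hreg : ∀ u ∈ I, 0 < 1 - g' u ^ 2)
    (κm : ℝ → ℝ) (hκm : ∀ u ∈ I, κm u = g'' u / (1 - g' u ^ 2) ^ ((3 : ℝ) / 2))
    -- the marginally trapped condition κ² = (κ_m f √(1−ġ²) + ġ)²/(1−ġ²) with κ ≡ a, f = u :
    (hmt : ∀ u ∈ I, a ^ 2 =
      (κm u * u * Real.sqrt (1 - g' u ^ 2) + g' u) ^ 2 / (1 - g' u ^ 2)) :
    ∃ ε : ℝ, (ε = 1 ∨ ε = -1) ∧ ∀ u ∈ I,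
      u * g'' u + g' u - g' u ^ 3 = ε * a * (1 - g' u ^ 2) ^ ((3 : ℝ) / 2) :=
  stmt_6_general a ha I hIconn g' g'' hg' hg''cont hreg κm hκm hmt
end

section
/- For the marginally trapped meridian surface with f(u) = u and ġ(u) = (±a·u + c)/√((±a·u+c)² + u²), the curvature of the meridian curve m: u ↦ (u, g(u)) equals κ_m(u) = −c/u² for u > 0. -/
/-! With `Q = (m u + c)² + u²` (`m = s a`), the quotient rule gives `g̈ = -c u / Q^{3/2}`, while
`1 - ġ² = u² / Q`. For `u > 0` the denominator `(1 - ġ²)^{3/2}` is `(u / √Q)³`, and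
`g̈ = -c (u / √Q)³ / u²`, so the factor `(u / √Q)³` cancels. -/

open Real

lemma hasDerivAt_affine_div_sqrt {m c u : ℝ} (hu : u ≠ 0) :
    HasDerivAt (fun x => (m * x + c) / √((m * x + c) ^ 2 + x ^ 2))
      (-c * u / √((m * u + c) ^ 2 + u ^ 2) ^ 3) u := by
  have hQ : 0 < (m * u + c) ^ 2 + u ^ 2 := by positivity
  have hp : HasDerivAt (fun x => m * x + c) m u := by
    simpa using ((hasDerivAt_id u).const_mul m).add_const c
  have hQ' : HasDerivAt (fun x => (m * x + c) ^ 2 + x ^ 2) (2 * (m * u + c) * m + 2 * u) u :=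
    ((hp.pow 2).add (hasDerivAt_pow 2 u)).congr_deriv (by push_cast; ring)
  have hsq : √((m * u + c) ^ 2 + u ^ 2) ^ 2 = (m * u + c) ^ 2 + u ^ 2 := sq_sqrt hQ.le
  refine (hp.div (hQ'.sqrt hQ.ne') (sqrt_pos.mpr hQ).ne').congr_deriv ?_
  field_simp
  linear_combination m * hsq

lemma one_sub_sq_div_sqrt_sq_add_sq (p : ℝ) {u : ℝ} (hu : u ≠ 0) :
    1 - (p / √(p ^ 2 + u ^ 2)) ^ 2 = (u / √(p ^ 2 + u ^ 2)) ^ 2 := by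
  have hQ : 0 < p ^ 2 + u ^ 2 := by positivity
  rw [div_pow, div_pow, sq_sqrt hQ.le]
  field_simp
  ring

lemma sq_rpow_three_halves {w : ℝ} (hw : 0 ≤ w) : (w ^ 2) ^ (3 / 2 : ℝ) = w ^ 3 := by
  rw [← rpow_natCast_mul hw, ← rpow_natCast]
  norm_num

theorem stmt_10_general (a c s : ℝ) (gdot : ℝ → ℝ)
    (hgdot : ∀ u : ℝ, gdot u =
      (s * a * u + c) / Real.sqrt ((s * a * u + c) ^ 2 + u ^ 2))
    (κm : ℝ → ℝ)
    (hκm : ∀ u : ℝ, 0 < u →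
      κm u = deriv gdot u / (1 - gdot u ^ 2) ^ ((3 : ℝ) / 2)) :
    ∀ u : ℝ, 0 < u → κm u = -c / u ^ 2 := by
  intro u hu
  have hQ : 0 < (s * a * u + c) ^ 2 + u ^ 2 := by positivity
  have hgddot : deriv gdot u = -c * u / √((s * a * u + c) ^ 2 + u ^ 2) ^ 3 := by
    rw [funext hgdot]
    exact (hasDerivAt_affine_div_sqrt hu.ne').deriv
  rw [hκm u hu, hgddot, hgdot u, one_sub_sq_div_sqrt_sq_add_sq _ hu.ne',
    sq_rpow_three_halves (div_pos hu (sqrt_pos.mpr hQ)).le]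
  field_simp

/-- For the marginally trapped meridian surface M′_m with f(u) = u and
ġ(u) = (±au + c)/√((±au+c)² + u²), the curvature κ_m = g̈/(1 − ġ²)^{3/2} of the meridian
m : u ↦ (u, g(u)) equals −c/u² for u > 0. -/
theorem stmt_10 (a c s : ℝ) (hs : s = 1 ∨ s = -1) (gdot : ℝ → ℝ)
    (hgdot : ∀ u : ℝ, gdot u =
      (s * a * u + c) / Real.sqrt ((s * a * u + c) ^ 2 + u ^ 2))
    (κm : ℝ → ℝ)
    (hκm : ∀ u : ℝ, 0 < u →
      κm u = deriv gdot u / (1 - gdot u ^ 2) ^ ((3 : ℝ) / 2)) :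
    ∀ u : ℝ, 0 < u → κm u = -c / u ^ 2 :=
  stmt_10_general a c s gdot hgdot κm hκm
end

section
/- For the meridian surface M″_m on the rotational hypersurface with spacelike axis, the mean curvature vector H = −((κ_m f√(ḟ²+ġ²) + ġ)/(2f√(ḟ²+ġ²)))·n₁ − (κ/(2f))·n₂ (with ⟨n₁,n₁⟩ = 1, ⟨n₂,n₂⟩ = −1, ⟨n₁,n₂⟩ = 0) is lightlike and nonzero if and only if κ ≠ 0 and κ² = (κ_m f√(ḟ²+ġ²) + ġ)²/(ḟ² + ġ²). -/
/-!
Since `⟨H,H⟩ = h₁² − h₂²`, `H` is lightlike exactly when `h₁² = h₂²`, and then `H ≠ 0` exactly when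
`h₂ ≠ 0`, i.e. `κ ≠ 0`. Cancelling the common factor `1/(2f)²` turns `h₁² = h₂²` into
`κ² = (κ_m f D + ġ)²/D²` with `D² = ḟ² + ġ²`.
-/

theorem lightlike_nonzero_iff {a b : ℝ} :
    (¬(a = 0 ∧ b = 0) ∧ a ^ 2 - b ^ 2 = 0) ↔ (b ≠ 0 ∧ a ^ 2 = b ^ 2) := by
  rw [sub_eq_zero]
  constructor
  · rintro ⟨hne, hsq⟩
    refine ⟨fun hb ↦ hne ⟨?_, hb⟩, hsq⟩
    rwa [hb, zero_pow two_ne_zero, pow_eq_zero_iff two_ne_zero] at hsq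
  · rintro ⟨hb, hsq⟩
    exact ⟨fun h ↦ hb h.2, hsq⟩

theorem div_mul_sq_eq_div_sq_iff {x y z c : ℝ} (hc : c ≠ 0) :
    (x / (c * y)) ^ 2 = (z / c) ^ 2 ↔ z ^ 2 = x ^ 2 / y ^ 2 := by
  rw [div_mul_eq_div_div_swap, div_pow, div_pow z, div_left_inj' (pow_ne_zero 2 hc), div_pow,
    eq_comm]

/-- The meridian surface M″_m (spacelike axis) is marginally trapped, i.e. its mean
curvature vector H = −((κ_m f√(ḟ²+ġ²)+ġ)/(2f√(ḟ²+ġ²)))n₁ − (κ/(2f))n₂ is lightlike and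
nonzero, if and only if κ ≠ 0 and κ² = (κ_m f√(ḟ²+ġ²)+ġ)²/(ḟ²+ġ²). -/
theorem stmt_12 (f f' g' κ κm : ℝ) (hf : 0 < f) (hE : 0 < f' ^ 2 + g' ^ 2)
    (D : ℝ) (hD : D = Real.sqrt (f' ^ 2 + g' ^ 2))
    (h₁ h₂ : ℝ)
    (hh₁ : h₁ = -((κm * f * D + g') / (2 * f * D))) -- n₁-component of H
    (hh₂ : h₂ = -(κ / (2 * f)))                     -- n₂-component of H
    (HH : ℝ) (hHH : HH = h₁ ^ 2 - h₂ ^ 2) :         -- ⟨H,H⟩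
    (¬(h₁ = 0 ∧ h₂ = 0) ∧ HH = 0) ↔
      (κ ≠ 0 ∧ κ ^ 2 = (κm * f * D + g') ^ 2 / (f' ^ 2 + g' ^ 2)) := by
  have h2f : 2 * f ≠ 0 := by positivity
  have hD2 : D ^ 2 = f' ^ 2 + g' ^ 2 := by rw [hD, Real.sq_sqrt hE.le]
  rw [hHH, lightlike_nonzero_iff, hh₁, hh₂, neg_sq, neg_sq, div_mul_sq_eq_div_sq_iff h2f, hD2,
    neg_ne_zero, div_ne_zero_iff, and_iff_left h2f]
end
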